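/- The number of vertices of the integer hull P_I = conv(P ∩ Z^n) satisfies |vertex(P_I)| ≤ β_Δ(P) · γ(n, Δ). -/

import Mathlib

open Matrix Set

/-- The real matrix obtained from an integer matrix by casting entries. -/
noncomputable def matR {m n : ℕ} (A : Matrix (Fin m) (Fin n) ℤ) :
    Matrix (Fin m) (Fin n) ℝ := A.map (fun a => (a : ℝ))

/-- The polyhedron `P = {x ∈ ℝⁿ : A x ≤ b}`. -/
def poly {m n : ℕ} (A : Matrix (Fin m) (Fin n) ℤ) (b : Fin m → ℤ) :
    Set (Fin n → ℝ) := {x | ∀ i, (matR A).mulVec x i ≤ (b i : ℝ)}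

/-- The set of integer points of `ℝⁿ`. -/
def intPts {n : ℕ} : Set (Fin n → ℝ) := {x | ∀ j, ∃ z : ℤ, x j = (z : ℝ)}

/-- The integer hull `P_I = conv(P ∩ ℤⁿ)`. -/
noncomputable def intHull {m n : ℕ} (A : Matrix (Fin m) (Fin n) ℤ) (b : Fin m → ℤ) :
    Set (Fin n → ℝ) := convexHull ℝ (poly A b ∩ intPts)

/-- `Δ(A)`: the maximum absolute value of determinants of all `n × n` submatrices of `A`. -/
def maxAbsSubdet {m n : ℕ} (A : Matrix (Fin m) (Fin n) ℤ) : ℕ :=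
  Finset.univ.sup fun f : Fin n → Fin m => ((A.submatrix f id).det).natAbs

/-- The rank (over `ℝ`) of the submatrix of `A` formed by the rows indexed by `J`. -/
noncomputable def rowsRank {m n : ℕ} (A : Matrix (Fin m) (Fin n) ℤ) (J : Finset (Fin m)) : ℕ :=
  ((matR A).submatrix (fun i : {i // i ∈ J} => (i : Fin m)) id).rank

/-- A `Δ`-deep base of the system `A x ≤ b`. -/
def DeepBase {m n : ℕ} (A : Matrix (Fin m) (Fin n) ℤ) (b : Fin m → ℤ) (Δ : ℕ)
    (B : Finset (Fin m)) : Prop :=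
  ∃ h : B.card = n,
    (A.submatrix (fun j : Fin n => ((B.orderIsoOfFin h j : {x // x ∈ B}) : Fin m)) id).det ≠ 0 ∧
    ∃ x : Fin n → ℝ,
      (∀ i ∈ B, (b i : ℝ) - ((Δ : ℝ) - 1) ≤ (matR A).mulVec x i) ∧
      (∀ i : Fin m, (matR A).mulVec x i ≤ (b i : ℝ))

/-- A set is convex-independent if none of its points lies in the convex hull of the others. -/
def ConvexIndependentSet {n : ℕ} (M : Set (Fin n → ℝ)) : Prop :=
  ∀ x ∈ M, x ∉ convexHull ℝ (M \ {x})

/-- The grid `{0, 1, …, Δ-1}ⁿ` inside `ℝⁿ`. -/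
def grid (n Δ : ℕ) : Set (Fin n → ℝ) := {x | ∀ j, ∃ z : ℕ, z < Δ ∧ x j = (z : ℝ)}

/-- `γ(n, Δ)`: the maximum cardinality of a convex-independent subset of `{0,…,Δ-1}ⁿ`. -/
noncomputable def gamma (n Δ : ℕ) : ℕ :=
  sSup {c : ℕ | ∃ M : Finset (Fin n → ℝ), M.card = c ∧
    (M : Set (Fin n → ℝ)) ⊆ grid n Δ ∧ ConvexIndependentSet (M : Set (Fin n → ℝ))}

/-!
Let `v` be a vertex of `P_I` and call a row nearly tight at `v` if its slack there is at most
`Δ - 1`. These rows span `ℝⁿ`: otherwise some nonsingular `n × n` submatrix `A_B` has a row whose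
removal keeps them in the span of the remaining rows of `A_B`, and the corresponding column of the
adjugate of `A_B` is a nonzero integer vector `z` orthogonal to them with `|A z| ≤ Δ` (each entry
of `A z` is an `n × n` minor of `A`). Then `v ± z ∈ P ∩ ℤⁿ`, contradicting extremality. So every
vertex lies in the strip of some `Δ`-deep base `B`. On that strip `x ↦ b_B - A_B x` is an
injective affine map sending the integer points into `{0, …, Δ-1}ⁿ`, and it keeps the vertices
convex-independent, so each deep base accounts for at most `γ(n, Δ)` vertices.
-/

section Linear

variable {m n : ℕ}

lemma det_matR (M : Matrix (Fin n) (Fin n) ℤ) : (matR M).det = M.det :=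
  ((Int.castRingHom ℝ).map_det M).symm

lemma matR_mulVec_intCast (A : Matrix (Fin m) (Fin n) ℤ) (z : Fin n → ℤ) :
    matR A *ᵥ (fun j => (z j : ℝ)) = fun i => ((A *ᵥ z) i : ℝ) :=
  funext fun i => ((Int.castRingHom ℝ).map_mulVec A z i).symm

lemma mem_intPts_iff {x : Fin n → ℝ} : x ∈ intPts ↔ ∃ z : Fin n → ℤ, x = fun j => (z j : ℝ) :=
  ⟨fun h => ⟨fun j => (h j).choose, funext fun j => (h j).choose_spec⟩,
    by rintro ⟨z, rfl⟩ j; exact ⟨z j, rfl⟩⟩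

lemma abs_det_submatrix_le_maxAbsSubdet (A : Matrix (Fin m) (Fin n) ℤ) (f : Fin n → Fin m) :
    |(A.submatrix f id).det| ≤ maxAbsSubdet A := by
  rw [Int.abs_eq_natAbs, Int.ofNat_le]
  exact Finset.le_sup (f := fun f : Fin n → Fin m => ((A.submatrix f id).det).natAbs)
    (Finset.mem_univ f)

theorem dotProduct_adjugate_col {ι R : Type*} [Fintype ι] [DecidableEq ι] [CommRing R]
    (M : Matrix ι ι R) (k : ι) (a : ι → R) :
    a ⬝ᵥ (fun j => M.adjugate j k) = (M.updateRow k a).det := by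
  rw [← cramer_transpose_apply, cramer_eq_adjugate_mulVec, ← adjugate_transpose, mulVec_transpose]
  rfl

theorem exists_ne_zero_orthogonal_rows_but_one (A : Matrix (Fin m) (Fin n) ℤ) (e : Fin n → Fin m)
    (hdet : (A.submatrix e id).det ≠ 0) (k : Fin n) :
    ∃ z : Fin n → ℤ, z ≠ 0 ∧ (∀ l ≠ k, (A *ᵥ z) (e l) = 0) ∧
      ∀ i, |(A *ᵥ z) i| ≤ maxAbsSubdet A := by
  classical
  set M := A.submatrix e id
  have hminor : ∀ i,
      (A *ᵥ fun j => M.adjugate j k) i = (A.submatrix (Function.update e k i) id).det := by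
    intro i
    rw [mulVec, dotProduct_adjugate_col]
    congr 1
    ext l j
    rcases eq_or_ne l k with rfl | hl
    · simp
    · simp [M, hl]
  refine ⟨fun j => M.adjugate j k, fun hz => hdet ?_, fun l hl => ?_, fun i => ?_⟩
  · simpa [hz, Function.update_eq_self] using (hminor (e k)).symm
  · rw [hminor]
    exact det_zero_of_row_eq hl (funext fun j => by simp [hl])
  · rw [hminor]
    exact abs_det_submatrix_le_maxAbsSubdet A _

end Linear

section Bases

variable {m n : ℕ} {A : Matrix (Fin m) (Fin n) ℤ} {b : Fin m → ℤ} {Δ : ℕ}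

def nearlyTightRows (A : Matrix (Fin m) (Fin n) ℤ) (b : Fin m → ℤ) (Δ : ℕ) (x : Fin n → ℝ) :
    Set (Fin m) :=
  {i | (b i : ℝ) - ((Δ : ℝ) - 1) ≤ (matR A *ᵥ x) i}

lemma intCast_mem_poly_iff {v : Fin n → ℤ} : (fun j => (v j : ℝ)) ∈ poly A b ↔ A *ᵥ v ≤ b := by
  simp only [poly, mem_ofPred_eq, matR_mulVec_intCast, Int.cast_le]
  rfl

lemma mem_nearlyTightRows_intCast_iff {v : Fin n → ℤ} {i : Fin m} :
    i ∈ nearlyTightRows A b Δ (fun j => (v j : ℝ)) ↔ b i - Δ < (A *ᵥ v) i := by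
  have hcast : ((b i - (Δ - 1) : ℤ) : ℝ) = (b i : ℝ) - ((Δ : ℝ) - 1) := by push_cast; ring
  simp only [nearlyTightRows, mem_ofPred_eq, matR_mulVec_intCast, ← hcast, Int.cast_le]
  omega

def baseIdx (B : Finset (Fin m)) (h : B.card = n) (j : Fin n) : Fin m := B.orderIsoOfFin h j

lemma range_baseIdx (B : Finset (Fin m)) (h : B.card = n) : range (baseIdx B h) = B := by
  ext i
  refine ⟨by rintro ⟨j, rfl⟩; exact (B.orderIsoOfFin h j).2, fun hi => ?_⟩
  exact ⟨(B.orderIsoOfFin h).symm ⟨i, hi⟩, by simp [baseIdx]⟩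

lemma det_submatrix_baseIdx_ne_zero_iff (A : Matrix (Fin m) (Fin n) ℤ) (B : Finset (Fin m))
    (h : B.card = n) :
    (A.submatrix (baseIdx B h) id).det ≠ 0 ↔ LinearIndepOn ℝ (matR A).row (B : Set (Fin m)) := by
  rw [← Int.cast_ne_zero (α := ℝ), ← det_matR, ← isUnit_iff_ne_zero, ← isUnit_iff_isUnit_det,
    ← linearIndependent_rows_iff_isUnit]
  exact linearIndependent_equiv (R := ℝ) (B.orderIsoOfFin h).toEquiv
    (f := fun i : (B : Set (Fin m)) => (matR A).row i)

lemma card_eq_of_linearIndepOn_of_range_subset_span (hrank : (matR A).rank = n)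
    {B : Finset (Fin m)} (hB : LinearIndepOn ℝ (matR A).row (B : Set (Fin m)))
    (hspan : range (matR A).row ⊆ Submodule.span ℝ ((matR A).row '' B)) : B.card = n := by
  have hspan_eq : Submodule.span ℝ ((matR A).row '' B) = Submodule.span ℝ (range (matR A).row) :=
    le_antisymm (Submodule.span_mono (image_subset_range _ _)) (Submodule.span_le.mpr hspan)
  have := finrank_span_eq_card hB
  rw [← image_eq_range (matR A).row B, hspan_eq, ← rank_eq_finrank_span_row, hrank] at this
  simpa using this.symm

lemma deepBase_of_subset_nearlyTightRows {B : Finset (Fin m)} {x : Fin n → ℝ}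
    (hx : x ∈ poly A b) (hB : ↑B ⊆ nearlyTightRows A b Δ x) (h : B.card = n)
    (hind : LinearIndepOn ℝ (matR A).row (B : Set (Fin m))) : DeepBase A b Δ B :=
  ⟨h, (det_submatrix_baseIdx_ne_zero_iff A B h).mpr hind, x, fun _ hi => hB hi, hx⟩

lemma mulVec_eq_zero_of_mem_span {S : Set (Fin m)} {z : Fin n → ℤ}
    (hS : ∀ i ∈ S, (A *ᵥ z) i = 0) {i : Fin m}
    (hi : (matR A).row i ∈ Submodule.span ℝ ((matR A).row '' S)) : (A *ᵥ z) i = 0 := by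
  have hzero : ∀ y ∈ Submodule.span ℝ ((matR A).row '' S), y ⬝ᵥ (fun j => (z j : ℝ)) = 0 := by
    intro y hy
    induction hy using Submodule.span_induction with
    | mem y hy =>
      obtain ⟨i, hi, rfl⟩ := hy
      exact (congrFun (matR_mulVec_intCast A z) i).trans (by simp [hS i hi])
    | zero => exact zero_dotProduct _
    | add x y _ _ hx hy => rw [add_dotProduct, hx, hy, add_zero]
    | smul a x _ hx => rw [smul_dotProduct, hx, smul_zero]
  have := congrFun (matR_mulVec_intCast A z) i
  exact_mod_cast this.symm.trans (hzero _ hi)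

end Bases

section DeepBases

variable {m n : ℕ} {A : Matrix (Fin m) (Fin n) ℤ} {b : Fin m → ℤ} {Δ : ℕ}

lemma eq_zero_of_add_mem_of_sub_mem_of_mem_extremePoints {E : Type*} [AddCommGroup E]
    [Module ℝ E] {C : Set E} {x y : E} (hx : x ∈ extremePoints ℝ C) (hadd : x + y ∈ C)
    (hsub : x - y ∈ C) : y = 0 := by
  have hmid : x ∈ openSegment ℝ (x + y) (x - y) :=
    ⟨1 / 2, 1 / 2, by norm_num, by norm_num, by norm_num, by module⟩
  simpa using hx.2 hadd hsub hmid

lemma mulVec_add_le {v z : Fin n → ℤ} (hv : A *ᵥ v ≤ b)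
    (hz₀ : ∀ i, b i - Δ < (A *ᵥ v) i → (A *ᵥ z) i = 0) (hz : ∀ i, |(A *ᵥ z) i| ≤ Δ) :
    A *ᵥ (v + z) ≤ b := by
  intro i
  show (A *ᵥ (v + z)) i ≤ b i
  have hvi : (A *ᵥ v) i ≤ b i := hv i
  have hzi := abs_le.mp (hz i)
  rw [mulVec_add, Pi.add_apply]
  by_cases hi : b i - Δ < (A *ᵥ v) i
  · rw [hz₀ i hi]
    omega
  · omega

/-- The rows that are not nearly tight at `v` have integer slack at least `Δ`, so `v ± z ∈ P`. -/
lemma eq_zero_of_orthogonal_nearlyTightRows {v z : Fin n → ℤ}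
    (hv : (fun j => (v j : ℝ)) ∈ extremePoints ℝ (intHull A b))
    (hz₀ : ∀ i ∈ nearlyTightRows A b Δ (fun j => (v j : ℝ)), (A *ᵥ z) i = 0)
    (hz : ∀ i, |(A *ᵥ z) i| ≤ Δ) : z = 0 := by
  have hvP : A *ᵥ v ≤ b := intCast_mem_poly_iff.mp (extremePoints_convexHull_subset hv).1
  have hmem : ∀ s : Fin n → ℤ, (∀ i, b i - Δ < (A *ᵥ v) i → (A *ᵥ s) i = 0) →
      (∀ i, |(A *ᵥ s) i| ≤ Δ) → (fun j => ((v + s) j : ℝ)) ∈ intHull A b :=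
    fun s hs₀ hs => subset_convexHull ℝ _
      ⟨intCast_mem_poly_iff.mpr (mulVec_add_le hvP hs₀ hs), mem_intPts_iff.mpr ⟨v + s, rfl⟩⟩
  have hz₀' : ∀ i, b i - Δ < (A *ᵥ v) i → (A *ᵥ z) i = 0 :=
    fun i hi => hz₀ i (mem_nearlyTightRows_intCast_iff.mpr hi)
  have hadd := hmem z hz₀' hz
  have hsub := hmem (-z) (fun i hi => by simp [mulVec_neg, hz₀' i hi])
    (fun i => by simpa [mulVec_neg] using hz i)
  have hzero := eq_zero_of_add_mem_of_sub_mem_of_mem_extremePoints (y := fun j => (z j : ℝ)) hv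
    (by convert hadd using 1; ext j; simp) (by convert hsub using 1; ext j; simp [sub_eq_add_neg])
  exact funext fun j => by simpa using congrFun hzero j

theorem exists_deepBase_subset_nearlyTightRows (hΔ : maxAbsSubdet A = Δ)
    (hrank : (matR A).rank = n) {v : Fin n → ℝ} (hv : v ∈ extremePoints ℝ (intHull A b)) :
    ∃ B : Finset (Fin m), DeepBase A b Δ B ∧ ↑B ⊆ nearlyTightRows A b Δ v := by
  obtain ⟨hvP, hvZ⟩ := extremePoints_convexHull_subset hv
  obtain ⟨I, hIJ, -, hJI, hI⟩ :=
    exists_linearIndepOn_extension (linearIndepOn_empty ℝ (matR A).row)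
      (empty_subset (nearlyTightRows A b Δ v))
  obtain ⟨I', -, hII', hI'span, hI'⟩ := exists_linearIndepOn_extension hI (subset_univ I)
  obtain ⟨B, rfl⟩ := (toFinite I').exists_finset_coe
  have hB : B.card = n :=
    card_eq_of_linearIndepOn_of_range_subset_span hrank hI' (by simpa using hI'span)
  by_cases hBI : ↑B ⊆ I
  · exact ⟨B, deepBase_of_subset_nearlyTightRows hvP (hBI.trans hIJ) hB hI', hBI.trans hIJ⟩
  -- a row of `B` outside `I` can be dropped: the nearly tight rows stay in the span of the rest
  obtain ⟨_, ⟨k, rfl⟩, hkI⟩ := not_subset.mp (range_baseIdx B hB ▸ hBI)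
  obtain ⟨z, hz, hzB, hzΔ⟩ := exists_ne_zero_orthogonal_rows_but_one A _
    ((det_submatrix_baseIdx_ne_zero_iff A B hB).mpr hI') k
  obtain ⟨v, rfl⟩ := mem_intPts_iff.mp hvZ
  refine absurd (eq_zero_of_orthogonal_nearlyTightRows hv (fun i hi => ?_) (hΔ ▸ hzΔ)) hz
  refine mulVec_eq_zero_of_mem_span (S := I) (fun i hi => ?_) (hJI ⟨i, hi, rfl⟩)
  obtain ⟨l, rfl⟩ : i ∈ range (baseIdx B hB) := range_baseIdx B hB ▸ hII' hi
  exact hzB l (by rintro rfl; exact hkI hi)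

end DeepBases

section Counting

variable {m n : ℕ} {A : Matrix (Fin m) (Fin n) ℤ} {b : Fin m → ℤ} {Δ : ℕ}

lemma convexIndependentSet_of_subset_extremePoints {C M : Set (Fin n → ℝ)} (hC : Convex ℝ C)
    (hM : M ⊆ extremePoints ℝ C) : ConvexIndependentSet M := fun _ hx hmem =>
  (hC.mem_extremePoints_iff_mem_sdiff_convexHull_sdiff.mp (hM hx)).2
    (convexHull_mono (sdiff_subset_sdiff_left (hM.trans extremePoints_subset)) hmem)

lemma ConvexIndependentSet.image {k : ℕ} {M : Set (Fin n → ℝ)} (hM : ConvexIndependentSet M)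
    (f : (Fin n → ℝ) →ᵃ[ℝ] (Fin k → ℝ)) (hf : Function.Injective f) :
    ConvexIndependentSet (f '' M) := by
  rintro _ ⟨x, hx, rfl⟩ hmem
  rw [← image_singleton, ← image_sdiff hf, ← f.image_convexHull] at hmem
  obtain ⟨y, hy, hyx⟩ := hmem
  exact hM x hx (hf hyx ▸ hy)

lemma finite_grid (n Δ : ℕ) : (grid n Δ).Finite :=
  (finite_range fun f : Fin n → Fin Δ => fun j => ((f j : ℕ) : ℝ)).subset fun x hx => by
    choose z hzΔ hz using hx
    exact ⟨fun j => ⟨z j, hzΔ j⟩, funext fun j => (hz j).symm⟩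

lemma ncard_le_gamma {M : Set (Fin n → ℝ)} (hM : M ⊆ grid n Δ) (hci : ConvexIndependentSet M) :
    M.ncard ≤ gamma n Δ := by
  obtain ⟨F, rfl⟩ := ((finite_grid n Δ).subset hM).exists_finset_coe
  rw [ncard_coe_finset]
  refine le_csSup ⟨(grid n Δ).ncard, ?_⟩ ⟨F, rfl, hM, hci⟩
  rintro _ ⟨F', rfl, hF', -⟩
  simpa using ncard_le_ncard hF' (finite_grid n Δ)

noncomputable def slackMap (A : Matrix (Fin m) (Fin n) ℤ) (b : Fin m → ℤ) (e : Fin n → Fin m) :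
    (Fin n → ℝ) →ᵃ[ℝ] (Fin n → ℝ) :=
  AffineMap.const ℝ _ (fun j => (b (e j) : ℝ)) - ((matR A).submatrix e id).mulVecLin.toAffineMap

lemma slackMap_apply (e : Fin n → Fin m) (x : Fin n → ℝ) (j : Fin n) :
    slackMap A b e x j = b (e j) - (matR A *ᵥ x) (e j) := rfl

lemma slackMap_injective {e : Fin n → Fin m} (hdet : (A.submatrix e id).det ≠ 0) :
    Function.Injective (slackMap A b e) := by
  have hunit : IsUnit (matR (A.submatrix e id)) := by
    rw [isUnit_iff_isUnit_det, det_matR, isUnit_iff_ne_zero]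
    exact_mod_cast hdet
  intro x y hxy
  refine mulVec_injective_iff_isUnit.mpr hunit (funext fun j => ?_)
  have := congrFun hxy j
  rw [slackMap_apply, slackMap_apply] at this
  exact neg_injective (add_left_cancel (a := (b (e j) : ℝ)) this)

lemma slackMap_mem_grid {e : Fin n → Fin m} {x : Fin n → ℝ} (hx : x ∈ poly A b ∩ intPts)
    (he : range e ⊆ nearlyTightRows A b Δ x) : slackMap A b e x ∈ grid n Δ := by
  obtain ⟨hxP, hxZ⟩ := hx
  obtain ⟨v, rfl⟩ := mem_intPts_iff.mp hxZ
  intro j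
  have hle : (A *ᵥ v) (e j) ≤ b (e j) := intCast_mem_poly_iff.mp hxP (e j)
  have hlt := mem_nearlyTightRows_intCast_iff.mp (he ⟨j, rfl⟩)
  refine ⟨(b (e j) - (A *ᵥ v) (e j)).toNat, by omega, ?_⟩
  rw [slackMap_apply, matR_mulVec_intCast, ← Int.cast_sub, ← Int.cast_natCast,
    Int.toNat_of_nonneg (by omega)]

def verticesAtBase (A : Matrix (Fin m) (Fin n) ℤ) (b : Fin m → ℤ) (Δ : ℕ) (B : Finset (Fin m)) :
    Set (Fin n → ℝ) :=
  {v ∈ extremePoints ℝ (intHull A b) | ↑B ⊆ nearlyTightRows A b Δ v}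

lemma image_verticesAtBase_subset_grid (B : Finset (Fin m)) (h : B.card = n) :
    slackMap A b (baseIdx B h) '' verticesAtBase A b Δ B ⊆ grid n Δ := by
  rintro _ ⟨v, ⟨hv, hBv⟩, rfl⟩
  exact slackMap_mem_grid (extremePoints_convexHull_subset hv) (range_baseIdx B h ▸ hBv)

lemma DeepBase.finite_verticesAtBase {B : Finset (Fin m)} (hB : DeepBase A b Δ B) :
    (verticesAtBase A b Δ B).Finite := by
  obtain ⟨h, hdet, -⟩ := hB
  exact Finite.of_finite_image ((finite_grid n Δ).subset (image_verticesAtBase_subset_grid B h))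
    (slackMap_injective hdet).injOn

lemma DeepBase.ncard_verticesAtBase_le {B : Finset (Fin m)} (hB : DeepBase A b Δ B) :
    (verticesAtBase A b Δ B).ncard ≤ gamma n Δ := by
  obtain ⟨h, hdet, -⟩ := hB
  rw [← ncard_image_of_injective _ (slackMap_injective hdet)]
  refine ncard_le_gamma (image_verticesAtBase_subset_grid B h) (ConvexIndependentSet.image ?_ _
    (slackMap_injective hdet))
  exact convexIndependentSet_of_subset_extremePoints (convex_convexHull ℝ _) fun v hv => hv.1

end Counting

theorem card_vertices_le_beta_mul_gamma_general {m n : ℕ}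
    (A : Matrix (Fin m) (Fin n) ℤ) (b : Fin m → ℤ) (Δ : ℕ)
    (hΔ : maxAbsSubdet A = Δ)
    (hrank : (matR A).rank = n) :
    (Set.extremePoints ℝ (intHull A b)).ncard ≤
      {B : Finset (Fin m) | DeepBase A b Δ B}.ncard * gamma n Δ := by
  classical
  set D := Finset.univ.filter (DeepBase A b Δ)
  have hD : ∀ B ∈ D, DeepBase A b Δ B := fun B hB => (Finset.mem_filter.mp hB).2
  have hcover : extremePoints ℝ (intHull A b) ⊆ ⋃ B ∈ D, verticesAtBase A b Δ B := fun v hv => by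
    obtain ⟨B, hB, hBv⟩ := exists_deepBase_subset_nearlyTightRows hΔ hrank hv
    exact mem_iUnion₂.mpr ⟨B, by simpa [D] using hB, hv, hBv⟩
  have hfin : (⋃ B ∈ D, verticesAtBase A b Δ B).Finite :=
    D.finite_toSet.biUnion fun B hB => (hD B hB).finite_verticesAtBase
  calc (extremePoints ℝ (intHull A b)).ncard
      ≤ (⋃ B ∈ D, verticesAtBase A b Δ B).ncard := ncard_le_ncard hcover hfin
    _ ≤ ∑ B ∈ D, (verticesAtBase A b Δ B).ncard := D.set_ncard_biUnion_le _
    _ ≤ D.card * gamma n Δ := Finset.sum_le_card_nsmul _ _ _ fun B hB =>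
        (hD B hB).ncard_verticesAtBase_le
    _ = {B : Finset (Fin m) | DeepBase A b Δ B}.ncard * gamma n Δ := by
        rw [← ncard_coe_finset]
        simp [D]

/-- The number of vertices of the integer hull satisfies
`|vertex(P_I)| ≤ β_Δ(P) · γ(n, Δ)`. -/
theorem card_vertices_le_beta_mul_gamma {m n : ℕ}
    (A : Matrix (Fin m) (Fin n) ℤ) (b : Fin m → ℤ) (Δ : ℕ)
    (hΔ : maxAbsSubdet A = Δ) (hΔ1 : 1 ≤ Δ)
    (hrank : (matR A).rank = n)
    (hfull : affineSpan ℝ (poly A b) = ⊤) :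
    (Set.extremePoints ℝ (intHull A b)).ncard ≤
      {B : Finset (Fin m) | DeepBase A b Δ B}.ncard * gamma n Δ :=
  card_vertices_le_beta_mul_gamma_general A b Δ hΔ hrank
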